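/- For any Hermitian n×n complex matrix A = (a_{ij}) with n ≥ 2, setting κ₀ = (16(n-1)+27)/(80(n-1)+144), one has -9/8·Σ_{i=1}^n |a_{ni}|² + 7/8·|a_{nn}|² - 1/2·(Σ_{i=1}^n a_{ii})·a_{nn} ≥ -κ₀·(Σ_{i=1}^n a_{ii})² - 9/16·Σ_{i,j=1}^n |a_{ij}|². -/

import Mathlib

/-!
Write `t` for the trace, `d = a_nn` and `Q` for the sum of the squares of the other diagonal
entries. The Frobenius norm counts the last row, the last column (which has the same entry norms)
and the remaining diagonal, so `Σ |a_ij|² ≥ 2 Σ |a_ni|² - d² + Q`, and Cauchy–Schwarz gives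
`(t - d)² ≤ (n - 1) Q`. After these two substitutions what is left is a quadratic form in `(d, t)`,
and `κ₀` is exactly the least constant making it positive semidefinite.
-/

open Finset

namespace Matrix.IsHermitian

variable {ι 𝕜 : Type*} [RCLike 𝕜] {A : Matrix ι ι 𝕜}

theorem norm_apply_comm (hA : A.IsHermitian) (i j : ι) : ‖A i j‖ = ‖A j i‖ := by
  rw [← hA.apply i j, norm_star]

theorem norm_apply_self_sq (hA : A.IsHermitian) (i : ι) : ‖A i i‖ ^ 2 = RCLike.re (A i i) ^ 2 := by
  conv_lhs => rw [← hA.coe_re_apply_self i]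
  rw [RCLike.norm_ofReal, sq_abs]

theorem two_mul_sum_row_sq_add_sum_diag_sq_le [Fintype ι] [DecidableEq ι] (hA : A.IsHermitian)
    (k : ι) :
    2 * ∑ j, ‖A k j‖ ^ 2 - ‖A k k‖ ^ 2 + ∑ i ∈ univ.erase k, ‖A i i‖ ^ 2 ≤
      ∑ i, ∑ j, ‖A i j‖ ^ 2 := by
  have hrow : ∀ i ∈ univ.erase k, ‖A k i‖ ^ 2 + ‖A i i‖ ^ 2 ≤ ∑ j, ‖A i j‖ ^ 2 := by
    intro i hi
    rw [hA.norm_apply_comm k i,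
      ← sum_pair (f := fun j => ‖A i j‖ ^ 2) (ne_of_mem_erase hi).symm]
    exact sum_le_sum_of_subset_of_nonneg (subset_univ _) fun j _ _ => by positivity
  have hcols := sum_le_sum hrow
  rw [sum_add_distrib] at hcols
  have hrow_k := add_sum_erase univ (fun j => ‖A k j‖ ^ 2) (mem_univ k)
  have hrows := add_sum_erase univ (fun i => ∑ j, ‖A i j‖ ^ 2) (mem_univ k)
  linarith

end Matrix.IsHermitian

theorem sq_sum_sub_le_card_sub_one_mul {ι : Type*} [Fintype ι] [DecidableEq ι] (f : ι → ℝ)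
    (k : ι) : (∑ i, f i - f k) ^ 2 ≤ (Fintype.card ι - 1) * ∑ i ∈ univ.erase k, f i ^ 2 := by
  have hcard : ((#(univ.erase k) : ℕ) : ℝ) = Fintype.card ι - 1 := by
    rw [card_erase_of_mem (mem_univ k), card_univ,
      Nat.cast_sub (Fintype.card_pos_iff.mpr ⟨k⟩), Nat.cast_one]
  rw [← hcard, ← add_sum_erase _ _ (mem_univ k), add_sub_cancel_left]
  exact sq_sum_le_card_mul_sum_sq

theorem half_mul_sub_le_of_sq_sub_le {m t d Q : ℝ} (hm : 0 < m) (hQ : (t - d) ^ 2 ≤ m * Q) :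
    1/2 * t * d - 5/16 * d ^ 2 ≤ 9/16 * Q + (16 * m + 27) / (80 * m + 144) * t ^ 2 := by
  have hκ : (16 * m + 27) / (80 * m + 144) * (16 * m * (5 * m + 9)) = m * (16 * m + 27) := by
    field_simp
    ring
  have hsos : 16 * m * (5 * m + 9) *
      (9/16 * Q + (16 * m + 27) / (80 * m + 144) * t ^ 2 - (1/2 * t * d - 5/16 * d ^ 2)) =
      9 * (5 * m + 9) * (m * Q - (t - d) ^ 2) + ((5 * m + 9) * d - (4 * m + 9) * t) ^ 2 := by
    linear_combination t ^ 2 * hκ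
  have hpos : 0 < 16 * m * (5 * m + 9) := by positivity
  have hprod : 0 ≤ 16 * m * (5 * m + 9) *
      (9/16 * Q + (16 * m + 27) / (80 * m + 144) * t ^ 2 - (1/2 * t * d - 5/16 * d ^ 2)) := by
    rw [hsos]
    have := sub_nonneg.mpr hQ
    positivity
  exact sub_nonneg.mp ((mul_nonneg_iff_of_pos_left hpos).mp hprod)

theorem hermitian_key_ineq (n : ℕ) (hn : 2 ≤ n)
    (A : Matrix (Fin n) (Fin n) ℂ) (hA : A.IsHermitian)
    (κ₀ : ℝ) (hκ : κ₀ = (16 * ((n : ℝ) - 1) + 27) / (80 * ((n : ℝ) - 1) + 144)) :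
    let ln : Fin n := ⟨n - 1, by omega⟩;
    -9/8 * (∑ i, ‖A ln i‖ ^ 2) + 7/8 * ‖A ln ln‖ ^ 2
      - 1/2 * (∑ i, (A i i).re) * (A ln ln).re ≥
      -κ₀ * (∑ i, (A i i).re) ^ 2 - 9/16 * (∑ i, ∑ j, ‖A i j‖ ^ 2) := by
  intro ln
  have hm : (0 : ℝ) < n - 1 := by
    have : (2 : ℝ) ≤ n := by exact_mod_cast hn
    linarith
  have hfrob := hA.two_mul_sum_row_sq_add_sum_diag_sq_le ln
  have hCS := sq_sum_sub_le_card_sub_one_mul (fun i => (A i i).re) ln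
  simp only [Fintype.card_fin] at hCS
  simp only [hA.norm_apply_self_sq, RCLike.re_to_complex] at hfrob ⊢
  have := half_mul_sub_le_of_sq_sub_le hm hCS
  subst hκ
  linarith
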